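/- Let G be a finite purely non-abelian group, and suppose Z(G) ∩ G' is a direct factor of Z(G); that is, there is a subgroup C of Z(G) with (Z(G) ∩ G') ∩ C = 1 and Z(G) = (Z(G) ∩ G')·C. Then Aut_{c'}(G) has a complement in Aut_c(G): there is a subgroup K of Aut(G) with K ⊆ Aut_c(G), K ∩ Aut_{c'}(G) = 1, and Aut_c(G) = Aut_{c'}(G)·K. -/

import Mathlib

/-!
The displacement `g ↦ φ g * g⁻¹` of a central automorphism `φ` is a homomorphism `G → Z(G)`.
Split it along `Z(G) = (Z(G) ∩ G') · C` and let `c` be its `C`-component. The endomorphism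
`k : g ↦ c g * g` is central, and in a finite purely non-abelian group every central
endomorphism is bijective: some power `τ` of it is idempotent, so `G` is the direct product of
`ker τ` and `range τ`, and `ker τ` is central, hence an abelian direct factor, hence trivial.
So `k` is an automorphism with displacement in `C`, and `φ k⁻¹` has displacement in
`Z(G) ∩ G'`. The automorphisms with displacement in `C` therefore form the complement.
-/

section

open Subgroup

lemma exists_isIdempotentElem_pow {M : Type*} [Monoid M] [Finite M] (a : M) :
    ∃ n, 0 < n ∧ IsIdempotentElem (a ^ n) := by
  obtain ⟨i, j, hne, hij⟩ := Finite.exists_ne_map_eq_of_infinite (a ^ · : ℕ → M)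
  wlog hlt : i < j generalizing i j
  · exact this j i hne.symm hij.symm (by omega)
  obtain ⟨p, hp, rfl⟩ : ∃ p, 0 < p ∧ j = i + p := ⟨j - i, by omega, by omega⟩
  have periodic : ∀ k m, a ^ (i + m + k * p) = a ^ (i + m) := by
    intro k m
    induction k with
    | zero => simp
    | succ k ih =>
      calc a ^ (i + m + (k + 1) * p) = a ^ (i + p) * a ^ (m + k * p) := by rw [← pow_add]; ring_nf
        _ = a ^ (i + m + k * p) := by rw [← hij, ← pow_add]; ring_nf
        _ = a ^ (i + m) := ih
  refine ⟨(i + 1) * p, by positivity, ?_⟩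
  have h := periodic (i + 1) ((i + 1) * p - i)
  rw [Nat.add_sub_cancel' (by nlinarith)] at h
  rw [IsIdempotentElem, ← pow_add, h]

def PurelyNonAbelian (G : Type*) [Group G] : Prop :=
  ∀ A B : Subgroup G, A.Normal → B.Normal →
    (∀ a ∈ A, ∀ b ∈ A, a * b = b * a) → A ⊓ B = ⊥ →
    (∀ g : G, ∃ a ∈ A, ∃ b ∈ B, g = a * b) → A = ⊥

variable {G : Type*} [Group G]

def centralEndomorphisms (G : Type*) [Group G] : Submonoid (Monoid.End G) where
  carrier := {σ | ∀ g, σ g * g⁻¹ ∈ center G}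
  one_mem' g := by simp [one_mem]
  mul_mem' {σ τ} hσ hτ g := by
    have : σ (τ g) * g⁻¹ = (σ (τ g) * (τ g)⁻¹) * (τ g * g⁻¹) := by group
    simpa only [Monoid.End.coe_mul, Function.comp_apply, this] using mul_mem (hσ (τ g)) (hτ g)

namespace centralEndomorphisms

variable {σ : G →* G} (hσ : ∀ g, σ g * g⁻¹ ∈ center G)
include hσ

lemma map_conj (g x : G) : σ (g * x * g⁻¹) = g * σ x * g⁻¹ := by
  have hz := mem_center_iff.mp (hσ g) (g * σ x * g⁻¹)
  calc σ (g * x * g⁻¹) = (σ g * g⁻¹) * (g * σ x * g⁻¹) * (σ g * g⁻¹)⁻¹ := by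
        simp only [map_mul, map_inv]; group
    _ = g * σ x * g⁻¹ := by rw [← hz]; group

lemma ker_le_center : σ.ker ≤ center G := by
  intro g hg
  simpa [σ.mem_ker.mp hg] using hσ g

lemma range_normal : σ.range.Normal :=
  ⟨by rintro _ ⟨x, rfl⟩ g; exact ⟨g * x * g⁻¹, map_conj hσ g x⟩⟩

lemma ker_eq_bot_of_idempotent (hG : PurelyNonAbelian G) (hσσ : ∀ g, σ (σ g) = σ g) :
    σ.ker = ⊥ := by
  refine hG _ _ σ.normal_ker (range_normal hσ) (fun a ha b _ => ?_) ?_ (fun g => ?_)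
  · exact (mem_center_iff.mp (ker_le_center hσ ha) b).symm
  · rw [eq_bot_iff]
    rintro _ ⟨hk, x, rfl⟩
    have hk : σ (σ x) = 1 := hk
    rw [hσσ] at hk
    simp [hk]
  · refine ⟨g * (σ g)⁻¹, ?_, σ g, ⟨g, rfl⟩, by group⟩
    simp [MonoidHom.mem_ker, hσσ]

end centralEndomorphisms

theorem centralEndomorphisms.bijective [Finite G] (hG : PurelyNonAbelian G) {σ : Monoid.End G}
    (hσ : σ ∈ centralEndomorphisms G) : Function.Bijective σ := by
  have : Finite (Monoid.End G) := Finite.of_injective _ DFunLike.coe_injective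
  obtain ⟨n, hn, hidem⟩ := exists_isIdempotentElem_pow σ
  have hker : MonoidHom.ker (σ ^ n : G →* G) = ⊥ :=
    ker_eq_bot_of_idempotent (pow_mem hσ n) hG (DFunLike.congr_fun hidem)
  obtain ⟨m, rfl⟩ : ∃ m, n = m + 1 := ⟨n - 1, by omega⟩
  have hinj : Function.Injective (σ ^ (m + 1) : G →* G) := (MonoidHom.ker_eq_bot_iff _).mp hker
  rw [pow_succ] at hinj
  exact Finite.injective_iff_bijective.mp (Function.Injective.of_comp hinj)

def centralShift (c : G →* G) (hc : ∀ g, c g ∈ center G) : Monoid.End G where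
  toFun g := c g * g
  map_one' := by simp
  map_mul' x y := by
    simp only [map_mul]
    rw [mul_assoc (c x), ← mul_assoc (c y), ← mem_center_iff.mp (hc y) x]
    group

lemma centralShift_apply (c : G →* G) (hc : ∀ g, c g ∈ center G) (g : G) :
    centralShift c hc g = c g * g := rfl

lemma centralShift_mem (c : G →* G) (hc : ∀ g, c g ∈ center G) :
    centralShift c hc ∈ centralEndomorphisms G := fun g => by
  simpa [centralShift_apply] using hc g

def displacement (σ : G →* G) (hσ : ∀ g, σ g * g⁻¹ ∈ center G) : G →* G :=
  MonoidHom.mk' (fun g => σ g * g⁻¹) fun x y => by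
    have hy := mem_center_iff.mp (hσ y) x⁻¹
    calc σ (x * y) * (x * y)⁻¹ = σ x * ((σ y * y⁻¹) * x⁻¹) := by simp only [map_mul]; group
      _ = σ x * x⁻¹ * (σ y * y⁻¹) := by rw [← hy]; group

lemma MonoidHom.exists_right_factor {M : Type*} [Group M] {A C : Subgroup G} (hC : C ≤ center G)
    (hAC : A ⊓ C = ⊥) (f : M →* G) (hf : ∀ x, ∃ a ∈ A, ∃ c ∈ C, f x = a * c) :
    ∃ p : M →* G, ∀ x, p x ∈ C ∧ f x * (p x)⁻¹ ∈ A := by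
  choose a ha c hc hac using hf
  have hdisj : Disjoint A C := disjoint_iff.mpr hAC
  have c_mul (x y : M) : c (x * y) = c x * c y := by
    have key : a (x * y) * c (x * y) = (a x * a y) * (c x * c y) := by
      rw [← hac, map_mul, hac, hac, mul_assoc, ← mul_assoc (c x),
        ← mem_center_iff.mp (hC (hc x)) (a y)]
      group
    exact congrArg (fun q => (q.2 : G)) <| Subgroup.mul_injective_of_disjoint hdisj
      (a₁ := (⟨_, ha (x * y)⟩, ⟨_, hc (x * y)⟩))
      (a₂ := (⟨_, mul_mem (ha x) (ha y)⟩, ⟨_, mul_mem (hc x) (hc y)⟩)) key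
  exact ⟨MonoidHom.mk' c c_mul, fun x => ⟨hc x, by simpa [hac] using ha x⟩⟩

def autWithDisplacementIn (C : Subgroup G) : Subgroup (MulAut G) where
  carrier := {φ | ∀ g, φ g * g⁻¹ ∈ C}
  one_mem' g := by simp [one_mem]
  mul_mem' {φ ψ} hφ hψ g := by
    have : φ (ψ g) * g⁻¹ = (φ (ψ g) * (ψ g)⁻¹) * (ψ g * g⁻¹) := by group
    simpa only [MulAut.mul_apply, this] using mul_mem (hφ (ψ g)) (hψ g)
  inv_mem' {φ} hφ g := by
    simpa using inv_mem (hφ (φ⁻¹ g))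

lemma mem_autWithDisplacementIn {C : Subgroup G} {φ : MulAut G} :
    φ ∈ autWithDisplacementIn C ↔ ∀ g, φ g * g⁻¹ ∈ C := Iff.rfl

lemma autWithDisplacementIn_mono {A C : Subgroup G} (h : A ≤ C) :
    autWithDisplacementIn A ≤ autWithDisplacementIn C :=
  fun _ hφ g => h (hφ g)

lemma autWithDisplacementIn_inf (A C : Subgroup G) :
    autWithDisplacementIn (A ⊓ C) = autWithDisplacementIn A ⊓ autWithDisplacementIn C := by
  ext φ
  simp only [mem_inf, mem_autWithDisplacementIn, forall_and]

lemma autWithDisplacementIn_bot : autWithDisplacementIn (⊥ : Subgroup G) = ⊥ := by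
  ext φ
  simp only [mem_autWithDisplacementIn, mem_bot, mul_inv_eq_one, MulEquiv.ext_iff]
  rfl

lemma mem_autWithDisplacementIn_iff_inv_mul {A : Subgroup G} [A.Normal] {φ : MulAut G} :
    φ ∈ autWithDisplacementIn A ↔ ∀ g, φ g⁻¹ * g ∈ A := by
  simp only [mem_autWithDisplacementIn, map_inv, ‹A.Normal›.mem_comm_iff (a := (φ _)⁻¹)]
  exact forall_congr' fun g => by rw [← inv_mem_iff, mul_inv_rev, inv_inv]

theorem autWithDisplacementIn_center_eq_mul [Finite G] (hG : PurelyNonAbelian G)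
    {A C : Subgroup G} (hC : C ≤ center G) (hAC : A ⊓ C = ⊥)
    (hZ : ∀ z ∈ center G, ∃ a ∈ A, ∃ c ∈ C, z = a * c) {φ : MulAut G}
    (hφ : φ ∈ autWithDisplacementIn (center G)) :
    ∃ ψ ∈ autWithDisplacementIn A, ∃ k ∈ autWithDisplacementIn C, φ = ψ * k := by
  obtain ⟨c, hc⟩ := (displacement φ.toMonoidHom hφ).exists_right_factor hC hAC
    fun g => hZ _ (hφ g)
  have hcZ (g : G) : c g ∈ center G := hC (hc g).1
  let k : MulAut G := MulEquiv.ofBijective (centralShift c hcZ)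
    (centralEndomorphisms.bijective hG (centralShift_mem c hcZ))
  have hk (g : G) : k g = c g * g := rfl
  refine ⟨φ * k⁻¹, fun g => ?_, k, fun g => by simpa [hk] using (hc g).1, by group⟩
  obtain ⟨h, rfl⟩ := k.surjective g
  have : (φ * k⁻¹) (k h) * (k h)⁻¹ = displacement φ.toMonoidHom hφ h * (c h)⁻¹ := by
    rw [MulAut.mul_apply, MulAut.inv_apply_self, hk]
    simp only [displacement, MonoidHom.mk'_apply, MulEquiv.coe_toMonoidHom, mul_inv_rev,
      mul_assoc]
  exact this ▸ (hc h).2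

end

/-- Let `G` be a finite purely non-abelian group (no non-trivial
abelian direct factor), and suppose `Z(G) ∩ G'` is a direct factor of `Z(G)`,
witnessed by a subgroup `C ≤ Z(G)` with `(Z(G) ∩ G') ∩ C = 1` and
`Z(G) = (Z(G) ∩ G')·C`.  Then `Aut_{c'}(G)` has a complement in `Aut_c(G)`:
there is a subgroup `K` of `Aut(G)` consisting of central automorphisms, with
`K ∩ Aut_{c'}(G) = 1` and `Aut_c(G) = Aut_{c'}(G)·K`. -/
theorem autc'_has_complement {G : Type*} [Group G] [Finite G]
    (hpna : ∀ A B : Subgroup G, A.Normal → B.Normal →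
      (∀ a ∈ A, ∀ b ∈ A, a * b = b * a) → A ⊓ B = ⊥ →
      (∀ g : G, ∃ a ∈ A, ∃ b ∈ B, g = a * b) → A = ⊥)
    (C : Subgroup G) (hC : C ≤ Subgroup.center G)
    (hCint : (Subgroup.center G ⊓ commutator G) ⊓ C = ⊥)
    (hCgen : ∀ z ∈ Subgroup.center G,
      ∃ a ∈ Subgroup.center G ⊓ commutator G, ∃ c ∈ C, z = a * c) :
    ∃ K : Subgroup (MulAut G),
      (∀ φ ∈ K, ∀ g : G, φ g * g⁻¹ ∈ Subgroup.center G) ∧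
      (∀ φ ∈ K, (∀ g : G, φ g⁻¹ * g ∈ Subgroup.center G ⊓ commutator G) →
        φ = (1 : MulAut G)) ∧
      (∀ φ : MulAut G, (∀ g : G, φ g * g⁻¹ ∈ Subgroup.center G) →
        ∃ ψ : MulAut G, (∀ g : G, ψ g⁻¹ * g ∈ Subgroup.center G ⊓ commutator G) ∧
          ∃ k ∈ K, φ = ψ * k) := by
  refine ⟨autWithDisplacementIn C, fun φ hφ => autWithDisplacementIn_mono hC hφ,
    fun φ hφ hφ' => ?_, fun φ hφ => ?_⟩
  · have : φ ∈ autWithDisplacementIn ((Subgroup.center G ⊓ commutator G) ⊓ C) :=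
      (autWithDisplacementIn_inf _ _).ge ⟨mem_autWithDisplacementIn_iff_inv_mul.mpr hφ', hφ⟩
    rwa [hCint, autWithDisplacementIn_bot, Subgroup.mem_bot] at this
  · obtain ⟨ψ, hψ, k, hk, rfl⟩ := autWithDisplacementIn_center_eq_mul hpna hC hCint hCgen hφ
    exact ⟨ψ, mem_autWithDisplacementIn_iff_inv_mul.mp hψ, k, hk, rfl⟩
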